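/- Suppose the toric ideal P is a complete intersection generated by binomials g_1, …, g_{n−1}. Then the vanishing ideal I(X) of the degenerate projective torus X is a complete intersection generated by the binomials h_1, …, h_{n−1}, where h_i = g_i(t_1^{d_1}, …, t_n^{d_n}) for i = 1, …, n−1. -/

import Mathlib

/-!
Write `θ` for the substitution `tᵢ ↦ tᵢ ^ dᵢ` and `φ` for the toric map `tᵢ ↦ y ^ dᵢ`. Since `Kˣ` is
cyclic, `{x ^ vᵢ : x ∈ Kˣ}` is the group of `dᵢ`-th roots of unity, so the affine cone over `X` is
the grid `μ_{d₁} × ⋯ × μ_{dₙ}`. Splitting exponents as `m = d ⌊m / d⌋ + (m mod d)` writes every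
polynomial as `f = ∑_c θ(F_c) t^c`. If `f` vanishes on the grid, so does its reduction
`∑_c (∑ coefficients of F_c) t^c` modulo the `tᵢ ^ dᵢ - 1`, which has degree `< dᵢ` in each `tᵢ`
and therefore vanishes by the combinatorial Nullstellensatz. If `f` is moreover homogeneous, `φ`
sends every monomial of `F_c` to the same power of `y`, so `φ(F_c) = 0`: hence
`I(X) ⊆ θ(P) S = (h₁, …, h_{n-1})`. Conversely each `hᵢ` vanishes on `X`, and it is homogeneous
because `gᵢ ∈ P` forces its two monomials to have the same `d`-weighted degree.
-/

open MvPolynomial Finset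

noncomputable section

namespace MvPolynomial

variable {σ R : Type*}

section CommSemiring

variable [CommSemiring R]

def expandPow (d : σ → ℕ) : MvPolynomial σ R →ₐ[R] MvPolynomial σ R := aeval fun i => X i ^ d i

def toricMap (d : σ → ℕ) : MvPolynomial σ R →ₐ[R] Polynomial R :=
  aeval fun i => Polynomial.X ^ d i

lemma eval_expandPow {d : σ → ℕ} {x : σ → R} (hx : ∀ i, x i ^ d i = 1) (f : MvPolynomial σ R) :
    eval x (expandPow d f) = eval 1 f := by
  change aeval x (aeval _ f) = aeval 1 f
  rw [comp_aeval_apply]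
  simp only [map_pow, aeval_X, hx]
  rfl

end CommSemiring

variable [Fintype σ]

def expDiv (d : σ → ℕ) (m : σ →₀ ℕ) : σ →₀ ℕ := Finsupp.equivFunOnFinite.symm fun i => m i / d i

def expMod (d : σ → ℕ) (m : σ →₀ ℕ) : σ →₀ ℕ := Finsupp.equivFunOnFinite.symm fun i => m i % d i

@[simp] lemma expDiv_apply (d : σ → ℕ) (m : σ →₀ ℕ) (i : σ) : expDiv d m i = m i / d i := rfl

@[simp] lemma expMod_apply (d : σ → ℕ) (m : σ →₀ ℕ) (i : σ) : expMod d m i = m i % d i := rfl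

section CommSemiring

variable [CommSemiring R]

lemma expandPow_prod_X_pow (d a : σ → ℕ) :
    expandPow d (∏ j, X j ^ a j : MvPolynomial σ R) = ∏ j, X j ^ (d j * a j) := by
  simp [expandPow, pow_mul]

lemma toricMap_prod_X_pow (d a : σ → ℕ) :
    toricMap d (∏ j, X j ^ a j : MvPolynomial σ R) = Polynomial.X ^ ∑ j, d j * a j := by
  simp [toricMap, ← pow_mul, prod_pow_eq_pow_sum]

lemma expandPow_monomial_expDiv_mul (d : σ → ℕ) (m : σ →₀ ℕ) (a : R) :
    expandPow d (monomial (expDiv d m) a) * monomial (expMod d m) 1 = monomial m a := by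
  rw [expandPow, aeval_monomial, monomial_eq, monomial_eq,
    Finsupp.prod_fintype _ _ fun _ => pow_zero _, Finsupp.prod_fintype _ _ fun _ => pow_zero _,
    Finsupp.prod_fintype _ _ fun _ => pow_zero _]
  simp only [expDiv_apply, expMod_apply, map_one, one_mul, mul_assoc, ← prod_mul_distrib,
    ← pow_mul, ← pow_add, Nat.div_add_mod, algebraMap_eq]

lemma toricMap_monomial_expDiv (d : σ → ℕ) (m : σ →₀ ℕ) (a : R) :
    toricMap d (monomial (expDiv d m) a) =
      Polynomial.monomial (m.degree - (expMod d m).degree) a := by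
  rw [toricMap, aeval_monomial, Finsupp.prod_fintype _ _ fun _ => pow_zero _]
  simp only [expDiv_apply, ← pow_mul, prod_pow_eq_pow_sum, Finsupp.degree_eq_sum, expMod_apply]
  rw [Polynomial.algebraMap_eq, Polynomial.C_mul_X_pow_eq_monomial]
  congr 2
  have := sum_congr rfl fun i (_ : i ∈ univ) => Nat.div_add_mod (m i) (d i)
  rw [sum_add_distrib] at this
  exact Nat.eq_sub_of_add_eq this

/-- `modPart d f` is the reduction of `f` modulo the `X i ^ d i - 1`; `divPart d c f` collects the
monomials of `f` with exponent `≡ c (mod d)`, so that `f = ∑ c, expandPow d (divPart d c f) * X ^ c`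
(`sum_expandPow_divPart_mul`). -/
def modPart (d : σ → ℕ) (f : MvPolynomial σ R) : MvPolynomial σ R :=
  ∑ m ∈ f.support, monomial (expMod d m) (coeff m f)

lemma eval_modPart {d : σ → ℕ} {x : σ → R} (hx : ∀ i, x i ^ d i = 1) (f : MvPolynomial σ R) :
    eval x (modPart d f) = eval x f := by
  conv_rhs => rw [f.as_sum]
  simp only [modPart, map_sum, eval_monomial, Finsupp.prod_fintype _ _ fun _ => pow_zero _,
    expMod_apply, ← pow_eq_pow_mod _ (hx _)]

lemma degreeOf_modPart_lt {d : σ → ℕ} {i : σ} (hd : 0 < d i) (f : MvPolynomial σ R) :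
    degreeOf i (modPart d f) < d i := by
  classical
  refine (degreeOf_lt_iff hd).2 fun m hm => ?_
  obtain ⟨m', -, hm'⟩ := mem_biUnion.1 (support_sum hm)
  rw [mem_singleton.1 (support_monomial_subset hm'), expMod_apply]
  exact Nat.mod_lt _ hd

variable [DecidableEq σ]

lemma coeff_modPart (d : σ → ℕ) (c : σ →₀ ℕ) (f : MvPolynomial σ R) :
    coeff c (modPart d f) = ∑ m ∈ f.support with expMod d m = c, coeff m f := by
  simp only [modPart, coeff_sum, coeff_monomial, sum_filter]

def divPart (d : σ → ℕ) (c : σ →₀ ℕ) (f : MvPolynomial σ R) : MvPolynomial σ R :=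
  ∑ m ∈ f.support with expMod d m = c, monomial (expDiv d m) (coeff m f)

lemma sum_expandPow_divPart_mul (d : σ → ℕ) (f : MvPolynomial σ R) :
    ∑ c ∈ f.support.image (expMod d), expandPow d (divPart d c f) * monomial c 1 = f := by
  calc ∑ c ∈ f.support.image (expMod d), expandPow d (divPart d c f) * monomial c 1
      = ∑ c ∈ f.support.image (expMod d), ∑ m ∈ f.support with expMod d m = c,
          monomial m (coeff m f) := by
        refine sum_congr rfl fun c _ => ?_
        rw [divPart, map_sum, sum_mul]
        refine sum_congr rfl fun m hm => ?_
        rw [← (mem_filter.1 hm).2, expandPow_monomial_expDiv_mul]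
    _ = f := by
        rw [sum_fiberwise_of_maps_to fun m hm => mem_image_of_mem _ hm]
        exact f.as_sum.symm

lemma toricMap_divPart {d : σ → ℕ} {f : MvPolynomial σ R} {e : ℕ} (hf : f.IsHomogeneous e)
    (c : σ →₀ ℕ) :
    toricMap d (divPart d c f) = Polynomial.monomial (e - c.degree) (coeff c (modPart d f)) := by
  rw [divPart, map_sum, coeff_modPart, map_sum]
  refine sum_congr rfl fun m hm => ?_
  obtain ⟨hms, rfl⟩ := mem_filter.1 hm
  rw [toricMap_monomial_expDiv, Finsupp.degree_apply, ← hf.degree_eq_sum_deg_support hms]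

end CommSemiring

lemma expandPow_prod_X_pow_sub [CommRing R] (d a b : σ → ℕ) :
    expandPow d (∏ j, X j ^ a j - ∏ j, X j ^ b j : MvPolynomial σ R) =
      ∏ j, X j ^ (d j * a j) - ∏ j, X j ^ (d j * b j) := by
  rw [map_sub, expandPow_prod_X_pow, expandPow_prod_X_pow]

lemma sum_mul_eq_of_prod_X_pow_sub_mem_ker [CommRing R] [Nontrivial R] {d a b : σ → ℕ}
    (h : (∏ j, X j ^ a j - ∏ j, X j ^ b j : MvPolynomial σ R) ∈
      RingHom.ker (toricMap (R := R) d)) :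
    ∑ j, d j * a j = ∑ j, d j * b j := by
  rw [RingHom.mem_ker, map_sub, toricMap_prod_X_pow, toricMap_prod_X_pow, sub_eq_zero] at h
  simpa using congrArg Polynomial.natDegree h

lemma isHomogeneous_prod_X_pow_sub [CommRing R] {a b : σ → ℕ} (h : ∑ j, a j = ∑ j, b j) :
    (∏ j, X j ^ a j - ∏ j, X j ^ b j : MvPolynomial σ R).IsHomogeneous (∑ j, a j) := by
  refine .sub (.prod _ _ _ fun j _ => isHomogeneous_X_pow _ _) ?_
  rw [h]
  exact .prod _ _ _ fun j _ => isHomogeneous_X_pow _ _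

section Domain

variable [CommRing R] [IsDomain R] {d : σ → ℕ}

lemma modPart_eq_zero (hζ : ∀ i, ∃ ζ : R, IsPrimitiveRoot ζ (d i)) (hd : ∀ i, 0 < d i)
    {f : MvPolynomial σ R} (hf : ∀ x : σ → R, (∀ i, x i ^ d i = 1) → eval x f = 0) :
    modPart d f = 0 := by
  refine eq_zero_of_eval_zero_at_prod_finset _ (fun i => Polynomial.nthRootsFinset (d i) (1 : R))
    (fun i => ?_) (fun x hx => ?_)
  · obtain ⟨ζ, hζ⟩ := hζ i
    rw [hζ.card_nthRootsFinset]
    exact degreeOf_modPart_lt (hd i) f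
  · have hx1 : ∀ i, x i ^ d i = 1 := fun i => (Polynomial.mem_nthRootsFinset (hd i) 1).1 (hx i)
    rw [eval_modPart hx1]
    exact hf x hx1

theorem mem_map_expandPow_ker_toricMap (hζ : ∀ i, ∃ ζ : R, IsPrimitiveRoot ζ (d i))
    (hd : ∀ i, 0 < d i) {f : MvPolynomial σ R} {e : ℕ} (hf : f.IsHomogeneous e)
    (hvan : ∀ x : σ → R, (∀ i, x i ^ d i = 1) → eval x f = 0) :
    f ∈ Ideal.map (expandPow d) (RingHom.ker (toricMap (R := R) d)) := by
  classical
  rw [← sum_expandPow_divPart_mul d f]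
  refine Ideal.sum_mem _ fun c _ => Ideal.mul_mem_right _ _ (Ideal.mem_map_of_mem _ ?_)
  rw [RingHom.mem_ker, toricMap_divPart hf, modPart_eq_zero hζ hd hvan, coeff_zero, map_zero]

end Domain

end MvPolynomial

lemma pow_pow_orderOf_pow_eq_one {G : Type*} [Group G] {β x : G}
    (hx : x ∈ Subgroup.zpowers β) (v : ℕ) : (x ^ v) ^ orderOf (β ^ v) = 1 := by
  obtain ⟨m, rfl⟩ := hx
  rw [← zpow_natCast (β ^ m) v, ← zpow_mul, mul_comm, zpow_mul, zpow_natCast,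
    ← zpow_natCast ((β ^ v) ^ m), ← zpow_mul, mul_comm, zpow_mul, zpow_natCast,
    pow_orderOf_eq_one, one_zpow]

lemma exists_units_pow_eq_iff_pow_orderOf_eq_one {R : Type*} [CommRing R] [IsDomain R]
    [Finite R] {β : Rˣ} (hβ : ∀ x : Rˣ, x ∈ Subgroup.zpowers β) (v : ℕ) {y : R} :
    (∃ x : Rˣ, (x : R) ^ v = y) ↔ y ^ orderOf (β ^ v) = 1 := by
  constructor
  · rintro ⟨x, rfl⟩
    rw [← Units.val_pow_eq_pow_val, ← Units.val_pow_eq_pow_val,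
      pow_pow_orderOf_pow_eq_one (hβ x), Units.val_one]
  · intro hy
    have : NeZero (orderOf (β ^ v)) := ⟨(orderOf_pos _).ne'⟩
    obtain ⟨k, -, hk⟩ :=
      (IsPrimitiveRoot.coe_units_iff.2 (IsPrimitiveRoot.orderOf (β ^ v))).eq_pow_of_pow_eq_one hy
    exact ⟨β ^ k, by rw [← hk, Units.val_pow_eq_pow_val, Units.val_pow_eq_pow_val, ← pow_mul,
      ← pow_mul, mul_comm]⟩

end

theorem toric_ci_implies_vanishing_ideal_ci_general
    (K : Type) [Field K] [Fintype K] (n : ℕ)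
    (v : Fin n → ℕ)
    (β : Kˣ) (hβ : ∀ x : Kˣ, x ∈ Subgroup.zpowers β)
    (d : Fin n → ℕ) (hd : ∀ i, d i = orderOf (β ^ v i))
    (IX : Ideal (MvPolynomial (Fin n) K))
    (hIX : IX = Ideal.span {f : MvPolynomial (Fin n) K |
      (∃ e, f.IsHomogeneous e) ∧
      ∀ x : Fin n → Kˣ, eval (fun i => (x i : K) ^ v i) f = 0})
    (P : Ideal (MvPolynomial (Fin n) K))
    (hP : P = RingHom.ker (aeval (fun i : Fin n => (Polynomial.X : Polynomial K) ^ d i) :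
      MvPolynomial (Fin n) K →ₐ[K] Polynomial K))
    (g : Fin (n - 1) → MvPolynomial (Fin n) K)
    (hbin : ∀ i, ∃ a b : Fin n → ℕ,
      g i = (∏ j, X j ^ a j) - ∏ j, X j ^ b j)
    (hgen : P = Ideal.span (Set.range g))
    (h : Fin (n - 1) → MvPolynomial (Fin n) K)
    (hh : ∀ i, h i = aeval (fun j : Fin n => (X j : MvPolynomial (Fin n) K) ^ d j) (g i)) :
    (∀ i, ∃ a b : Fin n → ℕ,
      h i = (∏ j, X j ^ a j) - ∏ j, X j ^ b j) ∧
    IX = Ideal.span (Set.range h) := by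
  have hP' : P = RingHom.ker (toricMap (R := K) d) := hP
  have hh' : ∀ i, h i = expandPow d (g i) := hh
  have hX : ∀ i {y : K}, (∃ x : Kˣ, (x : K) ^ v i = y) ↔ y ^ d i = 1 := fun i =>
    hd i ▸ exists_units_pow_eq_iff_pow_orderOf_eq_one hβ (v i)
  have hhbin : ∀ i, ∃ a b : Fin n → ℕ,
      h i = ∏ j, X j ^ a j - ∏ j, X j ^ b j ∧ ∑ j, a j = ∑ j, b j := fun i => by
    obtain ⟨a, b, hab⟩ := hbin i
    have hgP : g i ∈ RingHom.ker (toricMap (R := K) d) := hP' ▸ hgen ▸ Ideal.subset_span ⟨i, rfl⟩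
    exact ⟨_, _, by rw [hh' i, hab, expandPow_prod_X_pow_sub],
      sum_mul_eq_of_prod_X_pow_sub_mem_ker (hab ▸ hgP)⟩
  refine ⟨fun i => (hhbin i).imp fun a => Exists.imp fun b => And.left, le_antisymm ?_ ?_⟩
  · have hθg : ⇑(expandPow (R := K) d) ∘ g = h := by funext i; exact (hh' i).symm
    have hζ : ∀ i, ∃ ζ : K, IsPrimitiveRoot ζ (d i) := fun i =>
      ⟨_, hd i ▸ IsPrimitiveRoot.coe_units_iff.2 (IsPrimitiveRoot.orderOf (β ^ v i))⟩
    rw [hIX, Ideal.span_le, ← hθg, Set.range_comp, ← Ideal.map_span, ← hgen, hP']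
    rintro f ⟨⟨e, hf⟩, hfX⟩
    refine mem_map_expandPow_ker_toricMap hζ (fun i => hd i ▸ orderOf_pos _) hf fun y hy => ?_
    choose x hx using fun i => (hX i).2 (hy i)
    simpa only [hx] using hfX x
  · rw [hIX]
    refine Ideal.span_mono (Set.range_subset_iff.2 fun i => ⟨?_, fun x => ?_⟩)
    · obtain ⟨a, b, hab, hdeg⟩ := hhbin i
      exact ⟨_, hab ▸ isHomogeneous_prod_X_pow_sub hdeg⟩
    · obtain ⟨a, b, hab⟩ := hbin i
      rw [hh' i, eval_expandPow fun j => (hX j).1 ⟨x j, rfl⟩, hab]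
      simp

/-- **Theorem (b).** Let `K = 𝔽_q` be a finite field, `β` a generator of `Kˣ`,
`v : Fin n → ℕ` positive integers, `d i = orderOf (β ^ v i)`.  Let `IX` be the vanishing
ideal of the degenerate projective torus parameterized by `x_i ^ v_i`, and let `P` be the
toric ideal, i.e. the kernel of `t_i ↦ y ^ d i`.  If `P` is a complete intersection
generated by binomials `g 0, …, g (n-2)`, then `IX` is a complete intersection generated
by the binomials `h i = g i (t_1 ^ d 1, …, t_n ^ d n)`. -/
theorem toric_ci_implies_vanishing_ideal_ci
    (K : Type) [Field K] [Fintype K] (n : ℕ) (hn : 2 ≤ n)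
    (v : Fin n → ℕ) (hv : ∀ i, 0 < v i)
    (β : Kˣ) (hβ : ∀ x : Kˣ, x ∈ Subgroup.zpowers β)
    (d : Fin n → ℕ) (hd : ∀ i, d i = orderOf (β ^ v i))
    (IX : Ideal (MvPolynomial (Fin n) K))
    (hIX : IX = Ideal.span {f : MvPolynomial (Fin n) K |
      (∃ e, f.IsHomogeneous e) ∧
      ∀ x : Fin n → Kˣ, eval (fun i => (x i : K) ^ v i) f = 0})
    (P : Ideal (MvPolynomial (Fin n) K))
    (hP : P = RingHom.ker (aeval (fun i : Fin n => (Polynomial.X : Polynomial K) ^ d i) :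
      MvPolynomial (Fin n) K →ₐ[K] Polynomial K))
    (g : Fin (n - 1) → MvPolynomial (Fin n) K)
    (hbin : ∀ i, ∃ a b : Fin n → ℕ,
      g i = (∏ j, X j ^ a j) - ∏ j, X j ^ b j)
    (hgen : P = Ideal.span (Set.range g))
    (h : Fin (n - 1) → MvPolynomial (Fin n) K)
    (hh : ∀ i, h i = aeval (fun j : Fin n => (X j : MvPolynomial (Fin n) K) ^ d j) (g i)) :
    (∀ i, ∃ a b : Fin n → ℕ,
      h i = (∏ j, X j ^ a j) - ∏ j, X j ^ b j) ∧
    IX = Ideal.span (Set.range h) :=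
  toric_ci_implies_vanishing_ideal_ci_general K n v β hβ d hd IX hIX P hP g hbin hgen h hh
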